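/- arXiv:1905.01705 — 5 statements merged into one kernel-verified Lean document; each statement's English description precedes it below -/
import Mathlib

section
/- Fix n ≥ 1 and ρ ∈ (0,1). Define U(w) = 1 − (w^n/(K + w^{n+1}))², w₊ = (1−ρ^n)/(1−ρ^{n+1}), w₋ = ρ(1−ρ^n)/(1−ρ^{n+1}), and K = (1−ρ)ρ^n(1−ρ^n)^n/(1−ρ^{n+1})^{n+1}. Then U(w₊) = U(w₋) = 0 and w₋/w₊ = ρ. -/
/-!
Both `w₊` and `w₋` solve `wⁿ (1 - w) = K`, i.e. `K + w^{n+1} = wⁿ`, which makes the quotient in `U`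
equal to `1`: for `w₊` because `1 - w₊ = ρⁿ (1 - ρ) / (1 - ρ^{n+1})`, for `w₋` because
`1 - w₋ = (1 - ρ) / (1 - ρ^{n+1})`.
-/

section Potential

variable {F : Type*} [Field F]

theorem one_sub_sq_pow_div_eq_zero {n : ℕ} {K w : F} (hw : w ≠ 0) (hK : w ^ n * (1 - w) = K) :
    1 - (w ^ n / (K + w ^ (n + 1))) ^ 2 = 0 := by
  have hsum : K + w ^ (n + 1) = w ^ n := by rw [← hK]; ring
  rw [hsum, div_self (pow_ne_zero n hw), one_pow, sub_self]

variable (n : ℕ) {ρ : F}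

theorem pow_mul_one_sub_wPlus (hd : 1 - ρ ^ (n + 1) ≠ 0) :
    ((1 - ρ ^ n) / (1 - ρ ^ (n + 1))) ^ n * (1 - (1 - ρ ^ n) / (1 - ρ ^ (n + 1))) =
      (1 - ρ) * ρ ^ n * (1 - ρ ^ n) ^ n / (1 - ρ ^ (n + 1)) ^ (n + 1) := by
  rw [div_pow, one_sub_div hd, div_mul_div_comm, ← pow_succ]
  ring

theorem pow_mul_one_sub_wMinus (hd : 1 - ρ ^ (n + 1) ≠ 0) :
    (ρ * (1 - ρ ^ n) / (1 - ρ ^ (n + 1))) ^ n * (1 - ρ * (1 - ρ ^ n) / (1 - ρ ^ (n + 1))) =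
      (1 - ρ) * ρ ^ n * (1 - ρ ^ n) ^ n / (1 - ρ ^ (n + 1)) ^ (n + 1) := by
  rw [div_pow, mul_pow, one_sub_div hd, div_mul_div_comm, ← pow_succ]
  ring

end Potential

/-- Zeros of the potential `U(w) = 1 − (wⁿ/(K + w^{n+1}))²` are at
`w₊ = (1−ρⁿ)/(1−ρ^{n+1})` and `w₋ = ρ w₊`, and `w₋/w₊ = ρ`. -/
theorem potential_zeros (n : ℕ) (hn : 1 ≤ n) (ρ : ℝ) (hρ : ρ ∈ Set.Ioo (0:ℝ) 1) :
    let K : ℝ := (1 - ρ) * ρ ^ n * (1 - ρ ^ n) ^ n / (1 - ρ ^ (n + 1)) ^ (n + 1)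
    let U : ℝ → ℝ := fun w => 1 - (w ^ n / (K + w ^ (n + 1))) ^ 2
    let wp : ℝ := (1 - ρ ^ n) / (1 - ρ ^ (n + 1))
    let wm : ℝ := ρ * (1 - ρ ^ n) / (1 - ρ ^ (n + 1))
    U wp = 0 ∧ U wm = 0 ∧ wm / wp = ρ := by
  intro K U wp wm
  obtain ⟨hρ0, hρ1⟩ := hρ
  have ha : 1 - ρ ^ n ≠ 0 := (sub_pos.2 (pow_lt_one₀ hρ0.le hρ1 (by omega))).ne'
  have hd : 1 - ρ ^ (n + 1) ≠ 0 := (sub_pos.2 (pow_lt_one₀ hρ0.le hρ1 (by omega))).ne'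
  have hwp : wp ≠ 0 := div_ne_zero ha hd
  refine ⟨one_sub_sq_pow_div_eq_zero hwp (pow_mul_one_sub_wPlus n hd),
    one_sub_sq_pow_div_eq_zero (div_ne_zero (mul_ne_zero hρ0.ne' ha) hd)
      (pow_mul_one_sub_wMinus n hd), ?_⟩
  exact (div_eq_iff hwp).2 (mul_div_assoc ρ _ _)
end

section
/- Fix n ≥ 2 and ρ ∈ (0,1), and let w₊, w₋, K be as above. Define the polynomial g(w) = Σ_{p=0}^{n-1} g_p w^p with g_p = (1−ρ^{p+1})(1−ρ^n)^{n−2−p} (ρ/(1−ρ^{n+1}))^{n−1−p}. Then the polynomial identity w^n − w^{n+1} − K = (w₊ − w)(w − w₋) g(w) holds for all real w. -/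
/-- The factorization `wⁿ − w^{n+1} − K = (w₊ − w)(w − w₋) g(w)` with
`g(w) = Σ_{p<n} g_p w^p`, `g_p = (1−ρ^{p+1})(1−ρⁿ)^{n−2−p}(ρ/(1−ρ^{n+1}))^{n−1−p}`. -/
theorem potential_factorization (n : ℕ) (hn : 2 ≤ n) (ρ : ℝ)
    (hρ : ρ ∈ Set.Ioo (0:ℝ) 1) :
    let wp : ℝ := (1 - ρ ^ n) / (1 - ρ ^ (n + 1))
    let wm : ℝ := ρ * wp
    let K : ℝ := (1 - ρ) * ρ ^ n * (1 - ρ ^ n) ^ n / (1 - ρ ^ (n + 1)) ^ (n + 1)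
    let g : ℕ → ℝ := fun p =>
      (1 - ρ ^ (p + 1)) * (1 - ρ ^ n) ^ ((n : ℤ) - 2 - p)
        * (ρ / (1 - ρ ^ (n + 1))) ^ ((n : ℤ) - 1 - p)
    ∀ w : ℝ,
      w ^ n - w ^ (n + 1) - K
        = (wp - w) * (w - wm) * ∑ p ∈ Finset.range n, g p * w ^ p := by
  intro wp wm K g w
  obtain ⟨hρ0, hρ1⟩ := hρ
  have ha : (1:ℝ) - ρ ^ n ≠ 0 := by
    have : ρ ^ n < 1 := pow_lt_one₀ hρ0.le hρ1 (by omega)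
    have : (0:ℝ) < 1 - ρ ^ n := by linarith
    exact this.ne'
  have hb : (1:ℝ) - ρ ^ (n + 1) ≠ 0 := by
    have : ρ ^ (n+1) < 1 := pow_lt_one₀ hρ0.le hρ1 (by omega)
    have : (0:ℝ) < 1 - ρ ^ (n+1) := by linarith
    exact this.ne'
  have hsum : ∑ p ∈ Finset.range n, g p * w ^ p
      = ((∑ p ∈ Finset.range n, w ^ p * wm ^ (n - 1 - p))
        - ρ ^ n * ∑ p ∈ Finset.range n, w ^ p * wp ^ (n - 1 - p)) / (1 - ρ ^ n) := by
    rw [Finset.mul_sum, ← Finset.sum_sub_distrib, Finset.sum_div]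
    refine Finset.sum_congr rfl fun p hp => ?_
    rw [Finset.mem_range] at hp
    have hm : (n : ℤ) - 1 - p = ((n - 1 - p : ℕ) : ℤ) := by omega
    have hm2 : (n : ℤ) - 2 - p = ((n - 1 - p : ℕ) : ℤ) - 1 := by omega
    have hpow : ρ ^ n = ρ ^ (p + 1) * ρ ^ (n - 1 - p) := by
      rw [← pow_add]; congr 1; omega
    simp only [g, wp, wm, K, hm, hm2, zpow_sub_one₀ ha, zpow_natCast]
    rw [hpow] at ha ⊢
    simp only [mul_pow, div_pow]
    field_simp
  rw [hsum, mul_div_assoc', eq_div_iff ha]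
  have EA := geom_sum₂_mul w wm n
  have EB := geom_sum₂_mul w wp n
  have hscal : (w ^ n - w ^ (n + 1) - K) * (1 - ρ ^ n)
      = (wp - w) * (w ^ n - wm ^ n) + ρ ^ n * (w - wm) * (w ^ n - wp ^ n) := by
    simp only [wp, wm, K, mul_pow, div_pow]
    field_simp
    ring
  linear_combination hscal + (w - wp) * EA - ρ ^ n * (w - wm) * EB
end

section
/- The coefficients g_p defined by g_{n−1}=1, (w₊+w₋)g_{n−1} − g_{n−2} = 1, the recursion w₊w₋ g_{p+2} − (w₊+w₋) g_{p+1} + g_p = 0 for 0 ≤ p ≤ n−3, together with w₊w₋ g₁ − (w₊+w₋)g₀ = 0 and w₊w₋ g₀ = K, have the unique solution g_p = (1−ρ^{p+1})(1−ρ^n)^{n−2−p}(ρ/(1−ρ^{n+1}))^{n−1−p} for 0 ≤ p ≤ n−1. -/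
/-!
Read backwards, `f k := g (n - 1 - k)` satisfies the forward recurrence
`f (k + 2) = (w₊ + w₋) f (k + 1) - w₊ w₋ f k` with characteristic roots `w₊` and `w₋`, so it is
determined by `f 0` and `f 1` and must equal the combination `(w₋ᵏ - ρⁿ w₊ᵏ) / (1 - ρⁿ)` of the two
geometric solutions that matches them. Since `w₋ = ρ w₊`, that combination is the stated closed form.
-/

section SecondOrderRecurrence

variable {R : Type*}

def SatisfiesRecOn [Ring R] (s t : R) (N : ℕ) (f : ℕ → R) : Prop :=
  ∀ k, k + 2 ≤ N → f (k + 2) = s * f (k + 1) - t * f k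

theorem SatisfiesRecOn.eq_of_eq_of_eq [Ring R] {s t : R} {N : ℕ} {f f' : ℕ → R}
    (hf : SatisfiesRecOn s t N f) (hf' : SatisfiesRecOn s t N f')
    (h0 : f 0 = f' 0) (h1 : f 1 = f' 1) : ∀ k ≤ N, f k = f' k := by
  refine Nat.twoStepInduction (fun _ => h0) (fun _ => h1) fun k ih ih' hk => ?_
  rw [hf k hk, hf' k hk, ih (by omega), ih' (by omega)]

theorem satisfiesRecOn_reverse [Ring R] {s t : R} {n : ℕ} {g : ℕ → R}
    (hg : ∀ p, p + 3 ≤ n → t * g (p + 2) - s * g (p + 1) + g p = 0) :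
    SatisfiesRecOn s t (n - 1) fun k => g (n - 1 - k) := by
  intro k hk
  have := hg (n - 3 - k) (by omega)
  rw [show n - 3 - k + 2 = n - 1 - k by omega, show n - 3 - k + 1 = n - 1 - (k + 1) by omega,
    show n - 3 - k = n - 1 - (k + 2) by omega] at this
  rw [← sub_eq_zero, ← this]
  abel

theorem satisfiesRecOn_add_geom [CommRing R] (x y A B : R) (N : ℕ) :
    SatisfiesRecOn (x + y) (x * y) N fun k => A * x ^ k + B * y ^ k :=
  fun _ _ => by ring

end SecondOrderRecurrence

theorem closedForm_eq_geom_combination {F : Type*} [Field F] (ρ a b : F) (ha : a ≠ 0) (p k : ℕ) :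
    (1 - ρ ^ (p + 1)) * a ^ ((k : ℤ) - 1) * (ρ / b) ^ (k : ℤ)
      = ((ρ * (a / b)) ^ k - ρ ^ (p + k + 1) * (a / b) ^ k) / a := by
  rw [zpow_sub_one₀ ha, zpow_natCast, zpow_natCast]
  field_simp
  ring

/-- The recursion `g_{n−1}=1`, `(w₊+w₋)g_{n−1} − g_{n−2} = 1`,
`w₊w₋ g_{p+2} − (w₊+w₋) g_{p+1} + g_p = 0` (`0 ≤ p ≤ n−3`),
`w₊w₋ g₁ − (w₊+w₋)g₀ = 0`, `w₊w₋ g₀ = K` has the unique solution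
`g_p = (1−ρ^{p+1})(1−ρⁿ)^{n−2−p}(ρ/(1−ρ^{n+1}))^{n−1−p}` for `0 ≤ p ≤ n−1`. -/
theorem recursion_unique_solution (n : ℕ) (hn : 2 ≤ n) (ρ : ℝ)
    (hρ : ρ ∈ Set.Ioo (0:ℝ) 1) :
    let wp : ℝ := (1 - ρ ^ n) / (1 - ρ ^ (n + 1))
    let wm : ℝ := ρ * wp
    let K : ℝ := (1 - ρ) * ρ ^ n * (1 - ρ ^ n) ^ n / (1 - ρ ^ (n + 1)) ^ (n + 1)
    ∀ g : ℕ → ℝ,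
      g (n - 1) = 1 →
      (wp + wm) * g (n - 1) - g (n - 2) = 1 →
      (∀ p : ℕ, p + 3 ≤ n → wp * wm * g (p + 2) - (wp + wm) * g (p + 1) + g p = 0) →
      wp * wm * g 1 - (wp + wm) * g 0 = 0 →
      wp * wm * g 0 = K →
      ∀ p : ℕ, p ≤ n - 1 →
        g p = (1 - ρ ^ (p + 1)) * (1 - ρ ^ n) ^ ((n : ℤ) - 2 - p)
                * (ρ / (1 - ρ ^ (n + 1))) ^ ((n : ℤ) - 1 - p) := by
  intro wp wm K g hlast hpenult hrec _ _ p hp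
  have ha : 1 - ρ ^ n ≠ 0 := (sub_pos.2 (pow_lt_one₀ hρ.1.le hρ.2 (by omega))).ne'
  have hb : 1 - ρ ^ (n + 1) ≠ 0 := (sub_pos.2 (pow_lt_one₀ hρ.1.le hρ.2 (by omega))).ne'
  have hg1 : g (n - 2) = wp + wm - 1 := by rw [hlast] at hpenult; linarith
  have hgeom := satisfiesRecOn_add_geom wp wm (-ρ ^ n / (1 - ρ ^ n)) (1 - ρ ^ n)⁻¹ (n - 1)
  have hmatch := (satisfiesRecOn_reverse hrec).eq_of_eq_of_eq hgeom
    (by simp only [Nat.sub_zero, hlast, pow_zero]; field_simp; ring)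
    (by
      simp only [pow_one, Nat.sub_sub, one_add_one_eq_two, hg1, wm, wp]
      field_simp
      ring)
    (n - 1 - p) (by omega)
  rw [show n - 1 - (n - 1 - p) = p by omega] at hmatch
  rw [hmatch]
  obtain ⟨k, rfl⟩ : ∃ k, n = p + k + 1 := ⟨n - 1 - p, by omega⟩
  rw [show p + k + 1 - 1 - p = k by omega, show ((p + k + 1 : ℕ) : ℤ) - 2 - p = (k : ℤ) - 1 by
    push_cast; ring, show ((p + k + 1 : ℕ) : ℤ) - 1 - p = k by push_cast; ring,
    closedForm_eq_geom_combination ρ _ _ ha]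
  ring
end

section
/- The sequence R(n) = 2 v_{n+1} n^{(n+1)/2}/(v_{n+2} π^{n+1}) is strictly increasing in n for n ≥ 1. -/
open Real

/-- The unit `k`-ball volume. -/
noncomputable def ballVol (k : ℕ) : ℝ := π ^ ((k : ℝ) / 2) / Real.Gamma ((k : ℝ) / 2 + 1)

/-- The volume ratio `R(n) = 2 v_{n+1} n^{(n+1)/2}/(v_{n+2} π^{n+1})`. -/
noncomputable def volRatio (n : ℕ) : ℝ :=
  2 * ballVol (n + 1) * (n : ℝ) ^ (((n : ℝ) + 1) / 2) / (ballVol (n + 2) * π ^ (n + 1))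

/-- Log-convexity midpoint bound: `Γ(x+1/2)² ≤ Γ(x)Γ(x+1)` for `x > 0`. -/
lemma gamma_sq_le (x : ℝ) (hx : 0 < x) :
    Real.Gamma (x + 1/2) ^ 2 ≤ Real.Gamma x * Real.Gamma (x + 1) := by
  have h := Real.convexOn_log_Gamma.2 (Set.mem_Ioi.2 hx)
    (Set.mem_Ioi.2 (by linarith : (0:ℝ) < x + 1))
    (by norm_num : (0:ℝ) ≤ 1/2) (by norm_num : (0:ℝ) ≤ 1/2) (by norm_num)
  simp only [smul_eq_mul, Function.comp_apply] at h
  have hx2 : (1/2 : ℝ) * x + 1/2 * (x + 1) = x + 1/2 := by ring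
  rw [hx2] at h
  have p1 : 0 < Real.Gamma x := Real.Gamma_pos_of_pos hx
  have p2 : 0 < Real.Gamma (x + 1) := Real.Gamma_pos_of_pos (by linarith)
  have p3 : 0 < Real.Gamma (x + 1/2) := Real.Gamma_pos_of_pos (by linarith)
  have := Real.exp_le_exp.2 (by linarith : 2 * Real.log (Real.Gamma (x + 1/2)) ≤
    Real.log (Real.Gamma x) + Real.log (Real.Gamma (x+1)))
  rwa [Real.exp_add, Real.exp_log p1, Real.exp_log p2, two_mul, Real.exp_add,
    Real.exp_log p3, ← sq] at this

lemma powB (n : ℕ) (hn : 3 ≤ n) :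
    π * (n:ℝ) ^ (((n:ℝ) + 1)/2) < ((n:ℝ) + 1) ^ (((n:ℝ) + 2)/2) := by
  set N : ℝ := (n : ℝ) with hN
  have hN3 : (3:ℝ) ≤ N := by rw [hN]; exact_mod_cast hn
  have hN0 : (0:ℝ) < N := by linarith
  set p : ℝ := (N + 1)/2 with hp
  have hp0 : 0 < p := by rw [hp]; linarith
  have h1 : Real.exp (1/(N+1)) < (N+1)/N := by
    have hne : -(1/(N+1)) ≠ 0 := neg_ne_zero.2 (by positivity)
    have h := Real.add_one_lt_exp hne
    have hlt : (0:ℝ) < N/(N+1) := by positivity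
    have h2 : N/(N+1) < Real.exp (-(1/(N+1))) := by
      have he : -(1/(N+1)) + 1 = N/(N+1) := by field_simp; ring
      linarith [he ▸ h]
    rw [Real.exp_neg] at h2
    have h3 := inv_strictAnti₀ hlt h2
    rwa [inv_inv, inv_div] at h3
  have h2 : Real.exp (1/2) < ((N+1)/N) ^ p := by
    have := Real.rpow_lt_rpow (Real.exp_pos _).le h1 hp0
    rwa [← Real.exp_mul, show 1/(N+1) * p = 1/2 by rw [hp]; field_simp] at this
  have h3 : (2:ℝ) ≤ (N+1) ^ ((1:ℝ)/2) := by
    rw [← Real.sqrt_eq_rpow]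
    have h4 : (2:ℝ) = Real.sqrt 4 := by
      rw [show (4:ℝ) = 2^2 by norm_num, Real.sqrt_sq (by norm_num)]
    rw [h4]
    exact Real.sqrt_le_sqrt (by linarith)
  have h4 : π < 2 * Real.exp (1/2) := by
    have hsq : Real.exp (1/2) * Real.exp (1/2) = Real.exp 1 := by
      rw [← Real.exp_add]; norm_num
    nlinarith [Real.pi_lt_d2, Real.exp_one_gt_d9, Real.pi_pos, Real.exp_pos (1/2:ℝ)]
  have key : ((N:ℝ) + 1) ^ (((N:ℝ) + 2)/2) = (N+1)^((1:ℝ)/2) * (((N+1)/N)^p * N^p) := by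
    rw [← Real.mul_rpow (by positivity) hN0.le, div_mul_cancel₀ _ hN0.ne',
      ← Real.rpow_add (by linarith : (0:ℝ) < N+1)]
    congr 1
    rw [hp]; ring
  rw [key]
  have hNp : (0:ℝ) < N ^ p := Real.rpow_pos_of_pos hN0 p
  have hrp : (0:ℝ) < ((N+1)/N) ^ p := Real.rpow_pos_of_pos (by positivity) p
  have e1 : 2 * Real.exp (1/2) * N ^ p ≤ 2 * (((N+1)/N)^p * N^p) := by
    nlinarith [mul_lt_mul_of_pos_right h2 hNp]
  have e2 : 2 * (((N+1)/N)^p * N^p) ≤ (N+1)^((1:ℝ)/2) * (((N+1)/N)^p * N^p) :=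
    mul_le_mul_of_nonneg_right h3 (by positivity)
  nlinarith

lemma gamma52 : Real.Gamma (5/2) = 3/4 * Real.sqrt π := by
  rw [show (5/2:ℝ) = 3/2 + 1 by norm_num, Real.Gamma_add_one (by norm_num),
    show (3/2:ℝ) = 1/2 + 1 by norm_num, Real.Gamma_add_one (by norm_num),
    Real.Gamma_one_half_eq]
  ring

lemma gamma72 : Real.Gamma (7/2) = 15/8 * Real.sqrt π := by
  rw [show (7/2:ℝ) = 5/2 + 1 by norm_num, Real.Gamma_add_one (by norm_num), gamma52]
  ring

lemma gamma3 : Real.Gamma 3 = 2 := by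
  rw [show (3:ℝ) = 2 + 1 by norm_num, Real.Gamma_add_one (by norm_num),
    show (2:ℝ) = 1 + 1 by norm_num, Real.Gamma_add_one (by norm_num), Real.Gamma_one]
  ring

lemma two_rpow_32 : (2:ℝ) ^ ((3:ℝ)/2) = 2 * Real.sqrt 2 := by
  rw [show (3:ℝ)/2 = 1 + 1/2 by norm_num, Real.rpow_add (by norm_num), Real.rpow_one,
    ← Real.sqrt_eq_rpow]

lemma keyIneq (n : ℕ) (hn : 1 ≤ n) :
    Real.Gamma (((n:ℝ)+4)/2) ^ 2 * (n:ℝ) ^ (((n:ℝ)+1)/2) * π <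
      Real.Gamma (((n:ℝ)+5)/2) * Real.Gamma (((n:ℝ)+3)/2) * ((n:ℝ)+1) ^ (((n:ℝ)+2)/2) := by
  rcases Nat.lt_or_ge n 3 with h | h
  · interval_cases n
    · -- n = 1
      norm_num
      rw [gamma52, two_rpow_32]
      have hsimp : ((3:ℝ)/4*Real.sqrt π)^2 = 9/16*π := by
        rw [mul_pow, Real.sq_sqrt Real.pi_pos.le]; norm_num
      rw [hsimp]
      have h1 : π * π < 3.15 * 3.15 := by nlinarith [Real.pi_lt_d2, Real.pi_pos]
      have h2 : (1.3956:ℝ) < Real.sqrt 2 := by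
        nlinarith [Real.sq_sqrt (show (0:ℝ) ≤ 2 by norm_num), Real.sqrt_nonneg 2]
      nlinarith [h1, h2]
    · -- n = 2
      norm_num
      rw [gamma72, gamma52, two_rpow_32]
      have hs : Real.sqrt π * Real.sqrt π = π := Real.mul_self_sqrt Real.pi_pos.le
      nlinarith [Real.sq_sqrt (show (0:ℝ) ≤ 2 by norm_num), Real.sqrt_nonneg 2,
        Real.pi_pos, Real.sqrt_nonneg π, hs]
  · -- n ≥ 3
    have hA := gamma_sq_le (((n:ℝ)+3)/2) (by positivity)
    rw [show ((n:ℝ)+3)/2 + 1/2 = ((n:ℝ)+4)/2 by ring,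
      show ((n:ℝ)+3)/2 + 1 = ((n:ℝ)+5)/2 by ring] at hA
    have hB := powB n h
    have hp1 : (0:ℝ) < Real.Gamma (((n:ℝ)+5)/2) := Real.Gamma_pos_of_pos (by positivity)
    have hp2 : (0:ℝ) < Real.Gamma (((n:ℝ)+3)/2) := Real.Gamma_pos_of_pos (by positivity)
    have hc : (0:ℝ) ≤ (n:ℝ) ^ (((n:ℝ)+1)/2) * π :=
      mul_nonneg (Real.rpow_nonneg (Nat.cast_nonneg n) _) Real.pi_pos.le
    have s1 := mul_le_mul_of_nonneg_right hA hc
    have s2 := mul_lt_mul_of_pos_left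
      (show (n:ℝ) ^ (((n:ℝ)+1)/2) * π < ((n:ℝ)+1) ^ (((n:ℝ)+2)/2) by
        calc (n:ℝ) ^ (((n:ℝ)+1)/2) * π = π * (n:ℝ) ^ (((n:ℝ)+1)/2) := by ring
          _ < _ := hB) (mul_pos hp2 hp1)
    nlinarith [s1, s2]

lemma volRatio_eq (n : ℕ) : volRatio n =
    2 * Real.Gamma (((n:ℝ)+4)/2) * (n:ℝ) ^ (((n:ℝ)+1)/2) /
      (Real.Gamma (((n:ℝ)+3)/2) * π ^ ((n:ℝ) + 3/2)) := by
  have hpi := Real.pi_pos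
  have hg3 : (0:ℝ) < Real.Gamma (((n:ℝ)+3)/2) := Real.Gamma_pos_of_pos (by positivity)
  have hg4 : (0:ℝ) < Real.Gamma (((n:ℝ)+4)/2) := Real.Gamma_pos_of_pos (by positivity)
  rw [volRatio, ballVol, ballVol]
  rw [show ((n+1 : ℕ) : ℝ)/2 + 1 = ((n:ℝ)+3)/2 by push_cast; ring,
      show ((n+2 : ℕ) : ℝ)/2 + 1 = ((n:ℝ)+4)/2 by push_cast; ring,
      show ((n+1 : ℕ) : ℝ)/2 = ((n:ℝ)+1)/2 by push_cast; ring,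
      show ((n+2 : ℕ) : ℝ)/2 = ((n:ℝ)+2)/2 by push_cast; ring]
  rw [div_eq_div_iff (by positivity) (by positivity)]
  rw [← Real.rpow_natCast π (n+1)]
  field_simp
  have e : π ^ (((n:ℝ) + 1) / 2) * π ^ ((2 * (n:ℝ) + 3) / 2) =
      π ^ (((n:ℝ) + 2) / 2) * π ^ ((n + 1 : ℕ) : ℝ) := by
    rw [← Real.rpow_add hpi, ← Real.rpow_add hpi]; push_cast; ring_nf
  linear_combination ((n:ℝ) ^ (((n:ℝ) + 1) / 2)) * e

/-- `R(n)` is strictly increasing for `n ≥ 1`. -/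
theorem volRatio_strictMono : ∀ n : ℕ, 1 ≤ n → volRatio n < volRatio (n + 1) := by
  intro n hn
  rw [volRatio_eq n, volRatio_eq (n+1)]
  have hpi := Real.pi_pos
  have hP : (0:ℝ) < π ^ ((n:ℝ) + 3/2) := Real.rpow_pos_of_pos hpi _
  have hg3 : (0:ℝ) < Real.Gamma (((n:ℝ)+3)/2) := Real.Gamma_pos_of_pos (by positivity)
  rw [div_lt_div_iff₀
    (mul_pos hg3 hP)
    (mul_pos (Real.Gamma_pos_of_pos (by positivity)) (Real.rpow_pos_of_pos hpi _))]
  push_cast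
  rw [show ((n:ℝ)+1+3)/2 = ((n:ℝ)+4)/2 by ring, show ((n:ℝ)+1+4)/2 = ((n:ℝ)+5)/2 by ring,
    show (n:ℝ)+1+3/2 = ((n:ℝ)+3/2)+1 by ring, Real.rpow_add hpi, Real.rpow_one,
    show ((n:ℝ)+1+1)/2 = ((n:ℝ)+2)/2 by ring]
  have K := keyIneq n hn
  nlinarith [mul_lt_mul_of_pos_right K (by positivity : (0:ℝ) < 2 * π ^ ((n:ℝ) + 3/2))]
end

section
/- Let L u = (σ u')' + (n h₀^{n−2}/√(1+h₀'²)) u with σ = h₀^n/(1+h₀'²)^{3/2}, where h₀ > 0 has constant mean curvature and h₀'(z₁)=h₀'(z₂)=0. For a one-parameter family h(z,s) of such CMC profiles with mean curvature H(s), the derivative h_s := ∂h/∂s satisfies L h_s = (n+1) h^n H'(s) and h_{sz}(z₁)=h_{sz}(z₂)=0. Consequently, if e is a Neumann eigenfunction of L with eigenvalue 0, then H'(s) ∫_{z₁}^{z₂} e h^n dz = 0. -/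
open Set intervalIntegral

lemma pd_fst {F : ℝ × ℝ → ℝ} {z s : ℝ} (hF : DifferentiableAt ℝ F (z, s)) :
    HasDerivAt (fun t => F (t, s)) (fderiv ℝ F (z, s) ((1 : ℝ), (0 : ℝ))) z :=
  hF.hasFDerivAt.comp_hasDerivAt z ((hasDerivAt_id' (x := z)).prodMk (hasDerivAt_const z s))

lemma pd_snd {F : ℝ × ℝ → ℝ} {z s : ℝ} (hF : DifferentiableAt ℝ F (z, s)) :
    HasDerivAt (fun t => F (z, t)) (fderiv ℝ F (z, s) ((0 : ℝ), (1 : ℝ))) s :=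
  hF.hasFDerivAt.comp_hasDerivAt s ((hasDerivAt_const s z).prodMk (hasDerivAt_id' (x := s)))

lemma contDiff_dapply {F : ℝ × ℝ → ℝ} (hF : ContDiff ℝ (⊤ : ℕ∞) F) (v : ℝ × ℝ) :
    ContDiff ℝ (⊤ : ℕ∞) fun p => fderiv ℝ F p v :=
  (hF.fderiv_right (by simp)).clm_apply contDiff_const

lemma swap_pd {F : ℝ × ℝ → ℝ} (hF : ContDiff ℝ (⊤ : ℕ∞) F) (q v w : ℝ × ℝ) :
    fderiv ℝ (fun p => fderiv ℝ F p v) q w = fderiv ℝ (fun p => fderiv ℝ F p w) q v := by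
  have hd : DifferentiableAt ℝ (fderiv ℝ F) q :=
    ((hF.fderiv_right (m := (⊤ : ℕ∞)) (by simp)).differentiable (by simp)) q
  rw [fderiv_clm_apply hd (differentiableAt_const v),
    fderiv_clm_apply hd (differentiableAt_const w)]
  simp only [fderiv_fun_const, Pi.zero_apply, ContinuousLinearMap.comp_zero,
    ContinuousLinearMap.zero_comp, ContinuousLinearMap.add_apply,
    ContinuousLinearMap.comp_apply, ContinuousLinearMap.flip_apply,
    ContinuousLinearMap.zero_apply, zero_add, map_zero]
  exact hF.contDiffAt.isSymmSndFDerivAt (by rw [minSmoothness_of_isRCLikeNormedField]; norm_cast) w v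

/-- The Jacobi operator `L u = (σ u')' + (n h^{n−2}/√(1+h_z²)) u` with
`σ = hⁿ/(1+h_z²)^{3/2}`, for the profile `h(·,s)`. -/
noncomputable def Jacobi (n : ℕ) (h : ℝ → ℝ → ℝ) (s : ℝ) (u : ℝ → ℝ) : ℝ → ℝ :=
  fun z =>
    deriv (fun t =>
      (h t s) ^ n /
        ((1 + (deriv (fun w => h w s) t) ^ 2)
          * Real.sqrt (1 + (deriv (fun w => h w s) t) ^ 2)) * deriv u t) z
    + (n : ℝ) * (h z s) ^ ((n : ℤ) - 2)
        / Real.sqrt (1 + (deriv (fun w => h w s) z) ^ 2) * u z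

/-- For a family of CMC profiles `h(·,s)` with mean curvature `H(s)`,
`L h_s = (n+1) hⁿ H'(s)` with Neumann conditions for `h_s`; consequently any
Neumann eigenfunction `e` of `L` with eigenvalue `0` satisfies
`H'(s) ∫ e hⁿ = 0`. -/
theorem jacobi_of_hs (n : ℕ) (hn : 1 ≤ n) (z₁ z₂ : ℝ) (h12 : z₁ < z₂)
    (h : ℝ → ℝ → ℝ) (H : ℝ → ℝ) (s₀ : ℝ)
    (hsm : ContDiff ℝ (⊤ : ℕ∞) (fun p : ℝ × ℝ => h p.1 p.2))
    (hHsm : ContDiff ℝ (⊤ : ℕ∞) H)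
    (hpos : ∀ z ∈ Icc z₁ z₂, ∀ s, 0 < h z s)
    (hcmc : ∀ s, ∀ z ∈ Icc z₁ z₂,
      (1 / ((n : ℝ) + 1)) *
        (deriv (deriv (fun t => h t s)) z /
            ((1 + (deriv (fun t => h t s) z) ^ 2)
              * Real.sqrt (1 + (deriv (fun t => h t s) z) ^ 2))
          - (n : ℝ) / (h z s * Real.sqrt (1 + (deriv (fun t => h t s) z) ^ 2))) = H s)
    (hneu : ∀ s, deriv (fun t => h t s) z₁ = 0 ∧ deriv (fun t => h t s) z₂ = 0)
    -- self-adjointness of `L` for Neumann boundary conditions: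
    (hsa : ∀ u e : ℝ → ℝ, ContDiff ℝ 2 u → ContDiff ℝ 2 e →
      deriv u z₁ = 0 → deriv u z₂ = 0 → deriv e z₁ = 0 → deriv e z₂ = 0 →
      (∫ z in z₁..z₂, e z * Jacobi n h s₀ u z)
        = ∫ z in z₁..z₂, u z * Jacobi n h s₀ e z) :
    (∀ z ∈ Icc z₁ z₂,
      Jacobi n h s₀ (fun z => deriv (fun t => h z t) s₀) z
        = ((n : ℝ) + 1) * (h z s₀) ^ n * deriv H s₀) ∧
    deriv (fun z => deriv (fun t => h z t) s₀) z₁ = 0 ∧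
    deriv (fun z => deriv (fun t => h z t) s₀) z₂ = 0 ∧
    (∀ e : ℝ → ℝ, ContDiff ℝ 2 e →
      (∀ z ∈ Icc z₁ z₂, Jacobi n h s₀ e z = 0) →
      deriv e z₁ = 0 → deriv e z₂ = 0 →
      deriv H s₀ * ∫ z in z₁..z₂, e z * (h z s₀) ^ n = 0) := by
  have hfd : Differentiable ℝ (fun p : ℝ × ℝ => h p.1 p.2) := hsm.differentiable (by simp)
  set F : ℝ × ℝ → ℝ := fun p : ℝ × ℝ => h p.1 p.2 with hFdef
  let A : ℝ × ℝ → ℝ := fun p => fderiv ℝ F p ((1:ℝ), (0:ℝ))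
  let B : ℝ × ℝ → ℝ := fun p => fderiv ℝ F p ((0:ℝ), (1:ℝ))
  have hA : ContDiff ℝ (⊤ : ℕ∞) A := contDiff_dapply hsm _
  have hB : ContDiff ℝ (⊤ : ℕ∞) B := contDiff_dapply hsm _
  have hAd : Differentiable ℝ A := hA.differentiable (by simp)
  have hBd : Differentiable ℝ B := hB.differentiable (by simp)
  let C : ℝ × ℝ → ℝ := fun p => fderiv ℝ A p ((1:ℝ), (0:ℝ))
  let D : ℝ × ℝ → ℝ := fun p => fderiv ℝ B p ((1:ℝ), (0:ℝ))
  have hC : ContDiff ℝ (⊤ : ℕ∞) C := contDiff_dapply hA _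
  have hD : ContDiff ℝ (⊤ : ℕ∞) D := contDiff_dapply hB _
  have hCd : Differentiable ℝ C := hC.differentiable (by simp)
  have hDd : Differentiable ℝ D := hD.differentiable (by simp)
  let E : ℝ × ℝ → ℝ := fun p => fderiv ℝ D p ((1:ℝ), (0:ℝ))
  -- basic partial derivative facts
  have k1 : ∀ z s : ℝ, HasDerivAt (fun t => h t s) (A (z, s)) z :=
    fun z s => pd_fst (hfd _)
  have k2 : ∀ z s : ℝ, HasDerivAt (fun t => h z t) (B (z, s)) s :=
    fun z s => pd_snd (hfd _)
  have k1f : ∀ s : ℝ, deriv (fun t => h t s) = fun t => A (t, s) :=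
    fun s => funext fun t => (k1 t s).deriv
  have hu : (fun z => deriv (fun t => h z t) s₀) = fun z => B (z, s₀) :=
    funext fun z => (k2 z s₀).deriv
  -- Schwarz
  have sAB : ∀ p : ℝ × ℝ, fderiv ℝ A p ((0:ℝ),(1:ℝ)) = D p :=
    fun p => swap_pd hsm p _ _
  have sCE : ∀ p : ℝ × ℝ, fderiv ℝ C p ((0:ℝ),(1:ℝ)) = E p := by
    intro p
    have h1 := swap_pd hA p ((1:ℝ),(0:ℝ)) ((0:ℝ),(1:ℝ))
    have h2 : (fun q => fderiv ℝ A q ((0:ℝ),(1:ℝ))) = D := funext fun q => sAB q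
    rw [show C = fun q => fderiv ℝ A q ((1:ℝ),(0:ℝ)) from rfl] at *
    rw [h1, h2]
  -- second derivatives of sections
  have kA : ∀ z s : ℝ, HasDerivAt (fun t => A (t, s)) (C (z, s)) z :=
    fun z s => pd_fst (hAd _)
  have kB : ∀ z s : ℝ, HasDerivAt (fun t => B (t, s)) (D (z, s)) z :=
    fun z s => pd_fst (hBd _)
  have kD : ∀ z s : ℝ, HasDerivAt (fun t => D (t, s)) (E (z, s)) z :=
    fun z s => pd_fst (hDd _)
  have kAs : ∀ z s : ℝ, HasDerivAt (fun t => A (z, t)) (D (z, s)) s := by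
    intro z s; have := pd_snd (hAd (z, s)); rwa [sAB] at this
  have kCs : ∀ z s : ℝ, HasDerivAt (fun t => C (z, t)) (E (z, s)) s := by
    intro z s; have := pd_snd (hCd (z, s)); rwa [sCE] at this
  have kBs : ∀ z s : ℝ, HasDerivAt (fun t => h z t) (B (z, s)) s := k2
  have hDu : deriv (fun z => B (z, s₀)) = fun t => D (t, s₀) :=
    funext fun t => (kB t s₀).deriv
  -- Neumann conditions for h_s
  have neu : ∀ z : ℝ, (∀ s, deriv (fun t => h t s) z = 0) →
      deriv (fun w => deriv (fun t => h w t) s₀) z = 0 := by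
    intro z hz
    rw [hu, hDu]
    have hAz : (fun s => A (z, s)) = fun _ => (0:ℝ) := by
      funext s; rw [← (k1 z s).deriv, hz s]
    have : D (z, s₀) = 0 := by
      rw [← (kAs z s₀).deriv, hAz, deriv_const]
    simpa using this
  have neu1 : deriv (fun z => deriv (fun t => h z t) s₀) z₁ = 0 :=
    neu z₁ (fun s => (hneu s).1)
  have neu2 : deriv (fun z => deriv (fun t => h z t) s₀) z₂ = 0 :=
    neu z₂ (fun s => (hneu s).2)
  -- main pointwise identity
  have main : ∀ z ∈ Icc z₁ z₂,
      Jacobi n h s₀ (fun z => deriv (fun t => h z t) s₀) z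
        = ((n : ℝ) + 1) * (h z s₀) ^ n * deriv H s₀ := by
    intro z hz
    have hG : 0 < h z s₀ := hpos z hz s₀
    have hGne : h z s₀ ≠ 0 := ne_of_gt hG
    have hwne : (1:ℝ) + A (z, s₀) ^ 2 ≠ 0 := by positivity
    have hden_ne : (1 + A (z, s₀) ^ 2) * Real.sqrt (1 + A (z, s₀) ^ 2) ≠ 0 := by positivity
    -- unfold Jacobi and rewrite the inner derivatives
    simp only [Jacobi]
    rw [hu, hDu, k1f s₀]
    beta_reduce
    rw [(k2 z s₀).deriv]
    -- derivative of the first Jacobi term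
    have c1 : HasDerivAt (fun t : ℝ => 1 + A (t, s₀) ^ 2)
        (0 + 2 * A (z, s₀) ^ 1 * C (z, s₀)) z :=
      (hasDerivAt_const z 1).add ((kA z s₀).pow 2)
    have c2 := c1.sqrt hwne
    have c3 := c1.mul c2
    have c4 := (k1 z s₀).pow n
    have c5 := (c4.div c3 hden_ne).mul (kD z s₀)
    have hder1 : deriv (fun t => h t s₀ ^ n /
        ((1 + A (t, s₀) ^ 2) * Real.sqrt (1 + A (t, s₀) ^ 2)) * D (t, s₀)) z = _ := c5.deriv
    rw [hder1]
    -- derivative of H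
    have hHeq : H = fun s => (1 / ((n : ℝ) + 1)) *
        (C (z, s) / ((1 + A (z, s) ^ 2) * Real.sqrt (1 + A (z, s) ^ 2))
          - (n : ℝ) / (h z s * Real.sqrt (1 + A (z, s) ^ 2))) := by
      funext s
      rw [← hcmc s z hz, k1f s]
      beta_reduce
      rw [(kA z s).deriv]
    have d1 : HasDerivAt (fun t : ℝ => 1 + A (z, t) ^ 2)
        (0 + 2 * A (z, s₀) ^ 1 * D (z, s₀)) s₀ :=
      (hasDerivAt_const s₀ 1).add ((kAs z s₀).pow 2)
    have d2 := d1.sqrt hwne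
    have d3 := d1.mul d2
    have d4 := (kCs z s₀).div d3 hden_ne
    have hGW_ne : h z s₀ * Real.sqrt (1 + A (z, s₀) ^ 2) ≠ 0 :=
      ne_of_gt (mul_pos hG (Real.sqrt_pos.2 (by positivity)))
    have d5 := (kBs z s₀).mul d2
    have d6 := (hasDerivAt_const s₀ ((n:ℝ))).div d5 hGW_ne
    have d7 := (d4.sub d6).const_mul (1 / ((n:ℝ) + 1))
    rw [hHeq]
    erw [d7.deriv]
    simp only [Pi.mul_apply, Pi.div_apply, Pi.pow_apply, Pi.sub_apply]
    -- algebra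
    have hzp : h z s₀ ^ ((n:ℤ) - 2) = h z s₀ ^ n / h z s₀ ^ 2 := by
      rw [zpow_sub₀ hGne, zpow_natCast, show ((2:ℤ)) = ((2:ℕ):ℤ) by norm_num,
        zpow_natCast]
    rw [hzp]
    have hpow : h z s₀ ^ n = h z s₀ ^ (n - 1) * h z s₀ := by
      conv_lhs => rw [show n = (n - 1) + 1 from (Nat.succ_pred_eq_of_pos hn).symm]
      rw [pow_succ]
    rw [hpow]
    set w := Real.sqrt (1 + A (z, s₀) ^ 2) with hwdef
    have hwpos : 0 < w := Real.sqrt_pos.2 (by positivity)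
    have hw2 : w ^ 2 = 1 + A (z, s₀) ^ 2 := Real.sq_sqrt (by positivity)
    rw [← hw2]
    have hne1 : ((n:ℝ) + 1) ≠ 0 := by positivity
    field_simp
    ring
  refine ⟨main, neu1, neu2, ?_⟩
  intro e he hLe he1 he2
  have hu2 : ContDiff ℝ 2 (fun z => deriv (fun t => h z t) s₀) := by
    rw [hu]
    exact (hB.comp (contDiff_id.prodMk contDiff_const)).of_le (by norm_cast)
  have key := hsa (fun z => deriv (fun t => h z t) s₀) e hu2 he neu1 neu2 he1 he2
  have hIcc : uIcc z₁ z₂ = Icc z₁ z₂ := uIcc_of_le h12.le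
  have hrhs : (∫ z in z₁..z₂, (fun z => deriv (fun t => h z t) s₀) z * Jacobi n h s₀ e z)
      = 0 := by
    rw [show (fun z => (fun z => deriv (fun t => h z t) s₀) z * Jacobi n h s₀ e z)
        = fun z => (deriv (fun t => h z t) s₀) * Jacobi n h s₀ e z from rfl]
    rw [intervalIntegral.integral_congr (g := fun _ => (0:ℝ))
      (by intro z hz; rw [hIcc] at hz; simp [hLe z hz])]
    simp
  have hlhs : (∫ z in z₁..z₂, e z * Jacobi n h s₀ (fun z => deriv (fun t => h z t) s₀) z)
      = (((n:ℝ)+1) * deriv H s₀) * ∫ z in z₁..z₂, e z * (h z s₀) ^ n := by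
    have hcongr : EqOn (fun z => e z * Jacobi n h s₀ (fun z => deriv (fun t => h z t) s₀) z)
        (fun z => (((n:ℝ)+1) * deriv H s₀) * (e z * (h z s₀) ^ n)) (uIcc z₁ z₂) := by
      intro z hz
      rw [hIcc] at hz
      show e z * Jacobi n h s₀ (fun z => deriv (fun t => h z t) s₀) z
        = ((n:ℝ)+1) * deriv H s₀ * (e z * h z s₀ ^ n)
      rw [main z hz]; ring
    rw [intervalIntegral.integral_congr hcongr, intervalIntegral.integral_const_mul]
  rw [hlhs, hrhs] at key
  have hne : ((n:ℝ) + 1) ≠ 0 := by positivity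
  rw [mul_assoc] at key
  rcases mul_eq_zero.1 key with h' | h'
  · exact absurd h' hne
  · exact h'
end
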